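/- Let γ > 0 and N be the solution operator of v'' − γv − v³ + w = 0 on (0,∞). Then ∫₀^∞ w · Nw dx ≥ 0 for every w ∈ H^1(0,∞), and ∫₀^∞ (w₁ − w₂)(Nw₁ − Nw₂) dx ≥ 0 for all w₁, w₂ ∈ H^1(0,∞); i.e. N is a monotone operator in the L² pairing. -/

import Mathlib

/-!
Writing `φ s = γ s + s³`, the equation reads `v'' = φ(v) − w`. Multiplying the equation for
`u = v₁ − v₂` by `u` and integrating by parts over `[0, R]` gives
`∫₀^R (w₁ − w₂) u = ∫₀^R (u'² + (φ(v₁) − φ(v₂)) u) − u(R) u'(R)`, using `u'(0) = 0`.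
The first integrand is nonnegative because `φ` is monotone when `γ ≥ 0`. Since `u u'` is
integrable on `(0, ∞)`, the boundary term `u(R) u'(R)` is arbitrarily small for arbitrarily large
`R`, and letting `R → ∞` along such `R` gives the claim. The first inequality is the case `w₂ = 0`,
`v₂ = 0`.
-/

open MeasureTheory Set Filter

/-- `IsSol γ w v v' v''` : `v` solves `v'' − γv − v³ + w = 0` on `[0,∞)` with Neumann
condition at `0` and decay at infinity, with `v` and `v'` in `L²(0,∞)`. -/
def IsSol (γ : ℝ) (w v v' v'' : ℝ → ℝ) : Prop :=
  (∀ x ∈ Ici (0:ℝ), HasDerivAt v (v' x) x) ∧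
  (∀ x ∈ Ici (0:ℝ), HasDerivAt v' (v'' x) x) ∧
  (∀ x ∈ Ici (0:ℝ), v'' x - γ * v x - v x ^ 3 + w x = 0) ∧
  v' 0 = 0 ∧ Tendsto v atTop (nhds 0) ∧
  MemLp v 2 (volume.restrict (Ioi (0:ℝ))) ∧
  MemLp v' 2 (volume.restrict (Ioi (0:ℝ)))

lemma Monotone.sub_mul_sub_nonneg {φ : ℝ → ℝ} (hφ : Monotone φ) (a b : ℝ) :
    0 ≤ (φ a - φ b) * (a - b) := by
  rcases le_total a b with hab | hab
  · exact mul_nonneg_of_nonpos_of_nonpos (sub_nonpos.2 (hφ hab)) (sub_nonpos.2 hab)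
  · exact mul_nonneg (sub_nonneg.2 (hφ hab)) (sub_nonneg.2 hab)

lemma monotone_mul_add_pow_three {γ : ℝ} (hγ : 0 ≤ γ) : Monotone fun s : ℝ => γ * s + s ^ 3 :=
  (monotone_id.const_mul hγ).add (Odd.strictMono_pow (by decide : Odd 3)).monotone

lemma IntegrableOn.frequently_abs_lt_atTop {g : ℝ → ℝ} {a ε : ℝ} (hg : IntegrableOn g (Ioi a))
    (hε : 0 < ε) : ∃ᶠ x in atTop, |g x| < ε := by
  by_contra h
  obtain ⟨M, hM⟩ := eventually_atTop.1 (not_frequently.1 h)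
  have hconst : IntegrableOn (fun _ => ε) (Ioi (max M a)) := by
    refine (hg.mono_set (Ioi_subset_Ioi (le_max_right M a))).norm.mono'
      aestronglyMeasurable_const ?_
    filter_upwards [ae_restrict_mem measurableSet_Ioi] with x hx
    rw [Real.norm_eq_abs, Real.norm_eq_abs, abs_of_pos hε]
    exact not_lt.1 (hM x ((le_max_left M a).trans hx.le))
  rw [integrableOn_const_iff, Real.volume_Ioi] at hconst
  simp [hε.ne'] at hconst

lemma integral_Ioi_nonneg_of_neg_le_intervalIntegral {f g : ℝ → ℝ} {a : ℝ}
    (hf : IntegrableOn f (Ioi a)) (hg : IntegrableOn g (Ioi a))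
    (h : ∀ b, a ≤ b → -g b ≤ ∫ x in a..b, f x) :
    0 ≤ ∫ x in Ioi a, f x := by
  refine le_of_forall_pos_le_add fun ε hε => ?_
  have hbound : -ε ≤ ∫ x in Ioi a, f x := by
    refine ge_of_tendsto_of_frequently (intervalIntegral_tendsto_integral_Ioi a hf tendsto_id) ?_
    have hsmall := (IntegrableOn.frequently_abs_lt_atTop hg hε).and_eventually
      (eventually_ge_atTop a)
    refine hsmall.mono fun b ⟨hgb, hab⟩ => ?_
    show -ε ≤ ∫ x in a..b, f x
    linarith [h b hab, (abs_lt.1 hgb).2]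
  linarith

section Energy

variable {f q u u' u'' : ℝ → ℝ}

lemma mul_deriv_sub_le_intervalIntegral_mul {a b : ℝ} (hab : a ≤ b)
    (hu : ∀ x ∈ Icc a b, HasDerivAt u (u' x) x) (hu' : ∀ x ∈ Icc a b, HasDerivAt u' (u'' x) x)
    (heq : ∀ x ∈ Icc a b, u'' x = q x - f x) (hq : ContinuousOn q (Icc a b))
    (hqu : ∀ x ∈ Icc a b, 0 ≤ q x * u x)
    (hfu : IntervalIntegrable (fun x => f x * u x) volume a b) :
    u a * u' a - u b * u' b ≤ ∫ x in a..b, f x * u x := by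
  have hcu : ContinuousOn u (Icc a b) := fun x hx => (hu x hx).continuousAt.continuousWithinAt
  have hcu' : ContinuousOn u' (Icc a b) := fun x hx => (hu' x hx).continuousAt.continuousWithinAt
  have hE : IntervalIntegrable (fun x => u' x ^ 2 + q x * u x) volume a b :=
    ((hcu'.pow 2).add (hq.mul hcu)).intervalIntegrable_of_Icc hab
  have hderiv : ∀ x ∈ uIcc a b,
      HasDerivAt (fun x => u x * u' x) (u' x ^ 2 + q x * u x - f x * u x) x := by
    intro x hx
    rw [uIcc_of_le hab] at hx
    exact ((hu x hx).mul (hu' x hx)).congr_deriv (by rw [heq x hx]; ring)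
  have hparts : ∫ x in a..b, (u' x ^ 2 + q x * u x - f x * u x) = u b * u' b - u a * u' a :=
    intervalIntegral.integral_eq_sub_of_hasDerivAt hderiv (hE.sub hfu)
  have hE_nonneg : 0 ≤ ∫ x in a..b, (u' x ^ 2 + q x * u x) :=
    intervalIntegral.integral_nonneg hab fun x hx => add_nonneg (sq_nonneg _) (hqu x hx)
  rw [intervalIntegral.integral_sub hE hfu] at hparts
  linarith

lemma integral_Ioi_mul_nonneg_of_deriv_eq_zero {a : ℝ}
    (hu : ∀ x ∈ Ici a, HasDerivAt u (u' x) x) (hu' : ∀ x ∈ Ici a, HasDerivAt u' (u'' x) x)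
    (heq : ∀ x ∈ Ici a, u'' x = q x - f x) (hq : ContinuousOn q (Ici a))
    (hqu : ∀ x ∈ Ici a, 0 ≤ q x * u x) (ha : u' a = 0)
    (hu2 : MemLp u 2 (volume.restrict (Ioi a))) (hu'2 : MemLp u' 2 (volume.restrict (Ioi a)))
    (hf2 : MemLp f 2 (volume.restrict (Ioi a))) :
    0 ≤ ∫ x in Ioi a, f x * u x := by
  have hfu : IntegrableOn (fun x => f x * u x) (Ioi a) := hf2.integrable_mul hu2
  refine integral_Ioi_nonneg_of_neg_le_intervalIntegral hfu (hu2.integrable_mul hu'2) ?_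
  intro b hab
  have hsub : Icc a b ⊆ Ici a := Icc_subset_Ici_self
  have hfu_ab : IntervalIntegrable (fun x => f x * u x) volume a b := by
    rw [intervalIntegrable_iff_integrableOn_Ioc_of_le hab]
    exact hfu.mono_set Ioc_subset_Ioi_self
  have := mul_deriv_sub_le_intervalIntegral_mul hab (fun x hx => hu x (hsub hx))
    (fun x hx => hu' x (hsub hx)) (fun x hx => heq x (hsub hx)) (hq.mono hsub)
    (fun x hx => hqu x (hsub hx)) hfu_ab
  simpa [ha] using this

end Energy

theorem statement8_general
    (γ : ℝ) (hγ : 0 < γ) (w₁ w₂ v₁ v₁' v₁'' v₂ v₂' v₂'' : ℝ → ℝ)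
    (hw₁ : MemLp w₁ 2 (volume.restrict (Ioi (0:ℝ))))
    (hw₂ : MemLp w₂ 2 (volume.restrict (Ioi (0:ℝ))))
    (hsol₁ : IsSol γ w₁ v₁ v₁' v₁'')
    (hsol₂ : IsSol γ w₂ v₂ v₂' v₂'') :
    (0 ≤ ∫ x in Ioi (0:ℝ), w₁ x * v₁ x) ∧
    (0 ≤ ∫ x in Ioi (0:ℝ), (w₁ x - w₂ x) * (v₁ x - v₂ x)) := by
  obtain ⟨hd₁, hd₁', heq₁, h0₁, -, hL₁, hL₁'⟩ := hsol₁
  obtain ⟨hd₂, hd₂', heq₂, h0₂, -, hL₂, hL₂'⟩ := hsol₂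
  set φ : ℝ → ℝ := fun s => γ * s + s ^ 3 with hφ_def
  have hφ : Monotone φ := monotone_mul_add_pow_three hγ.le
  have hφc : Continuous φ := by fun_prop
  have hc₁ : ContinuousOn v₁ (Ici 0) := continuousOn_of_forall_continuousAt fun x hx =>
    (hd₁ x hx).continuousAt
  have hc₂ : ContinuousOn v₂ (Ici 0) := continuousOn_of_forall_continuousAt fun x hx =>
    (hd₂ x hx).continuousAt
  constructor
  · refine integral_Ioi_mul_nonneg_of_deriv_eq_zero (q := fun x => φ (v₁ x)) hd₁ hd₁'
      (fun x hx => by linarith [heq₁ x hx]) (hφc.comp_continuousOn hc₁)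
      (fun x _ => by simpa [hφ_def] using hφ.sub_mul_sub_nonneg (v₁ x) 0) h0₁ hL₁ hL₁' hw₁
  · refine integral_Ioi_mul_nonneg_of_deriv_eq_zero (q := fun x => φ (v₁ x) - φ (v₂ x))
      (u'' := fun x => v₁'' x - v₂'' x) (fun x hx => (hd₁ x hx).sub (hd₂ x hx))
      (fun x hx => (hd₁' x hx).sub (hd₂' x hx))
      (fun x hx => by linarith [heq₁ x hx, heq₂ x hx])
      ((hφc.comp_continuousOn hc₁).sub (hφc.comp_continuousOn hc₂))
      (fun x _ => hφ.sub_mul_sub_nonneg (v₁ x) (v₂ x)) (by simp [h0₁, h0₂])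
      (hL₁.sub hL₂) (hL₁'.sub hL₂') (hw₁.sub hw₂)

/-- `∫₀^∞ w·Nw ≥ 0` for every `w ∈ H¹(0,∞)`, and
`∫₀^∞ (w₁ − w₂)(Nw₁ − Nw₂) ≥ 0`; i.e. `N` is monotone in the `L²` pairing. -/
theorem statement8
    (γ : ℝ) (hγ : 0 < γ) (w₁ w₂ v₁ v₁' v₁'' v₂ v₂' v₂'' : ℝ → ℝ)
    (hw₁ : MemLp w₁ 2 (volume.restrict (Ioi (0:ℝ))))
    (hw₂ : MemLp w₂ 2 (volume.restrict (Ioi (0:ℝ))))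
    (hw₁H1 : ∃ w₁' : ℝ → ℝ, (∀ x ∈ Ioi (0:ℝ), HasDerivAt w₁ (w₁' x) x) ∧
      MemLp w₁' 2 (volume.restrict (Ioi (0:ℝ))))
    (hw₂H1 : ∃ w₂' : ℝ → ℝ, (∀ x ∈ Ioi (0:ℝ), HasDerivAt w₂ (w₂' x) x) ∧
      MemLp w₂' 2 (volume.restrict (Ioi (0:ℝ))))
    (hsol₁ : IsSol γ w₁ v₁ v₁' v₁'')
    (hsol₂ : IsSol γ w₂ v₂ v₂' v₂'') :
    (0 ≤ ∫ x in Ioi (0:ℝ), w₁ x * v₁ x) ∧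
    (0 ≤ ∫ x in Ioi (0:ℝ), (w₁ x - w₂ x) * (v₁ x - v₂ x)) :=
  statement8_general γ hγ w₁ w₂ v₁ v₁' v₁'' v₂ v₂' v₂'' hw₁ hw₂ hsol₁ hsol₂
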